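/- Let Δ₁, Δ₂ be Jordan domains containing 0, let h_t^j denote the intrinsic rotation of ∂Δ_j (the boundary extension of ζ_j⁻¹ ∘ R_t ∘ ζ_j for a Riemann map ζ_j fixing 0), and let φ : ∂Δ₁ → ∂Δ₂ be a homeomorphism satisfying φ ∘ h_t¹ = h_t² ∘ φ for some irrational t. Then for points z₁ ∈ Δ₁, z₂ ∈ Δ₂, the statement 'z₁ and z₂ have the same conformal position relative to markings b and φ(b)' does not depend on the choice of b ∈ ∂Δ₁: if ζ_{1,b}(z₁) = ζ_{2,φ(b)}(z₂) for one choice of b ∈ ∂Δ₁, then the same equality holds for every b' ∈ ∂Δ₁. -/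

import Mathlib

open Set Metric

noncomputable def unitDisk : Set ℂ := Metric.ball (0 : ℂ) 1

noncomputable def rigidRot (t : ℝ) (z : ℂ) : ℂ :=
  Complex.exp (2 * Real.pi * Complex.I * (t : ℂ)) * z

def IsJordanDomain (Δ : Set ℂ) : Prop :=
  IsOpen Δ ∧ IsConnected Δ ∧ Bornology.IsBounded Δ ∧
    ∃ γ : ℝ → ℂ, Continuous γ ∧ (∀ s, γ (s + 1) = γ s) ∧
      Set.InjOn γ (Set.Ico (0 : ℝ) 1) ∧ Set.range γ = frontier Δ

/-- A Riemann map of `Δ` fixing `0`, with a continuous inverse `η`, extending to a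
homeomorphism of closures. -/
def IsRiemannMapPair (Δ : Set ℂ) (ζ η : ℂ → ℂ) : Prop :=
  DifferentiableOn ℂ ζ Δ ∧ Set.BijOn ζ Δ unitDisk ∧
    ContinuousOn ζ (closure Δ) ∧ Set.BijOn ζ (closure Δ) (closure unitDisk) ∧
    ContinuousOn η (closure unitDisk) ∧
    Set.InvOn η ζ (closure Δ) (closure unitDisk) ∧ ζ 0 = 0

/-- A marked Riemann map additionally sends the marked boundary point `b` to `1`. -/
def IsMarkedRiemannMap (Δ : Set ℂ) (b : ℂ) (ζ : ℂ → ℂ) : Prop :=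
  DifferentiableOn ℂ ζ Δ ∧ Set.BijOn ζ Δ unitDisk ∧
    ContinuousOn ζ (closure Δ) ∧ Set.BijOn ζ (closure Δ) (closure unitDisk) ∧
    (∃ η : ℂ → ℂ, ContinuousOn η (closure unitDisk) ∧
      Set.InvOn η ζ (closure Δ) (closure unitDisk)) ∧
    ζ 0 = 0 ∧ ζ b = 1

/-!
Two Riemann maps `ζ, ξ` of `Δ` fixing `0` and extending to homeomorphisms of the closures differ
by a constant factor: injectivity forces simple zeros at `0`, so `ξ / ζ` extends to a zero-free
holomorphic function of modulus one on `∂Δ`, and the maximum principle applied to it and to its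
inverse makes it constant. Hence the map marked at `b` is `ζ / ζ b`.

On the circle, `φ` becomes `ψ = ζ₂ ∘ φ ∘ η₁`, which is continuous and commutes with the rotation
`R_t`. As `t` is irrational the `R_t`-orbit of `1` is dense, so `ψ` is multiplication by a
constant `a`. Then `ξ₁ z₁ = ξ₂ z₂` for the maps marked at `b` and `φ b` reads
`a * ζ₁ z₁ = ζ₂ z₂`, in which `b` no longer occurs.
-/

open Filter Topology Bornology Real

theorem Complex.not_injOn_of_eventually_eq_add_pow {f φ : ℂ → ℂ} {z₀ : ℂ} {n : ℕ} {U : Set ℂ}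
    (hn : 2 ≤ n) (hφ : map φ (𝓝 z₀) = 𝓝 0) (hfφ : ∀ᶠ z in 𝓝 z₀, f z = f z₀ + φ z ^ n)
    (hU : U ∈ 𝓝 z₀) : ¬ InjOn f U := by
  intro hinj
  obtain ⟨ω, hω⟩ : ∃ ω : ℂ, IsPrimitiveRoot ω n := ⟨_, Complex.isPrimitiveRoot_exp n (by omega)⟩
  set W := {z ∈ U | f z = f z₀ + φ z ^ n}
  have hW : ∀ᶠ w in 𝓝 (0 : ℂ), w ∈ φ '' W := hφ ▸ image_mem_map (inter_mem hU hfφ)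
  have hωW : ∀ᶠ w in 𝓝 (0 : ℂ), ω * w ∈ φ '' W :=
    (continuous_const_mul ω).tendsto' 0 0 (mul_zero ω) hW
  obtain ⟨w, ⟨hwW, hωwW⟩, hw0⟩ := ((hW.and hωW).filter_mono
    (nhdsWithin_le_nhds (s := {0}ᶜ)) |>.and self_mem_nhdsWithin).exists
  obtain ⟨a, ⟨haU, ha⟩, rfl⟩ := hwW
  obtain ⟨b, ⟨hbU, hb⟩, hφb⟩ := hωwW
  have hab : a = b := hinj haU hbU <| by rw [ha, hb, hφb, mul_pow, hω.pow_eq_one, one_mul]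
  refine hω.ne_one (by omega) (mul_right_cancel₀ (hw0 : φ a ≠ 0) ?_)
  rw [← hφb, hab, one_mul]

theorem AnalyticAt.exists_pow_eq {g : ℂ → ℂ} {z₀ : ℂ} (hg : AnalyticAt ℂ g z₀) (hg₀ : g z₀ ≠ 0)
    {n : ℕ} (hn : n ≠ 0) : ∃ h : ℂ → ℂ, AnalyticAt ℂ h z₀ ∧ ∀ z, h z ^ n = g z := by
  obtain ⟨c, hc⟩ := IsAlgClosed.exists_pow_nat_eq (g z₀) (Nat.pos_of_ne_zero hn)
  refine ⟨fun z ↦ c * (g z / g z₀) ^ (n⁻¹ : ℂ), ?_, fun z ↦ ?_⟩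
  · refine analyticAt_const.mul ((hg.div analyticAt_const hg₀).cpow analyticAt_const ?_)
    simp [hg₀]
  · rw [mul_pow, Complex.cpow_nat_inv_pow _ hn, hc, mul_div_cancel₀ _ hg₀]

theorem Complex.deriv_ne_zero_of_injOn {f : ℂ → ℂ} {U : Set ℂ} {z₀ : ℂ} (hU : IsOpen U)
    (hf : DifferentiableOn ℂ f U) (hinj : InjOn f U) (hz₀ : z₀ ∈ U) : deriv f z₀ ≠ 0 := by
  intro hderiv
  have hfa : AnalyticAt ℂ f z₀ := hf.analyticAt (hU.mem_nhds hz₀)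
  have hord : analyticOrderAt (f · - f z₀) z₀ ≠ ⊤ := by
    rw [Ne, analyticOrderAt_eq_top]
    intro hconst
    obtain ⟨z, ⟨hz, hzU⟩, hne⟩ := ((hconst.and (hU.mem_nhds hz₀)).filter_mono
      (nhdsWithin_le_nhds (s := {z₀}ᶜ)) |>.and self_mem_nhdsWithin).exists
    exact hne (hinj hzU hz₀ (sub_eq_zero.mp hz))
  obtain ⟨n, hn⟩ := ENat.ne_top_iff_exists.mp hord
  have hn2 : 2 ≤ n := by
    have hderiv_ord : 1 ≤ analyticOrderAt (deriv f) z₀ := by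
      rw [Order.one_le_iff_ne_zero, Ne, hfa.deriv.analyticOrderAt_eq_zero, not_not]
      exact hderiv
    have hord_succ := hfa.analyticOrderAt_deriv_add_one
    rw [← hn] at hord_succ
    exact_mod_cast hord_succ ▸ add_le_add_left hderiv_ord 1
  -- near `z₀`, `f - f z₀ = ((z - z₀) * h z) ^ n` with `(z - z₀) * h z` a local homeomorphism
  obtain ⟨g, hga, hg₀, hfg⟩ :=
    ((by fun_prop : AnalyticAt ℂ (f · - f z₀) z₀).analyticOrderAt_eq_natCast).mp hn.symm
  obtain ⟨h, hha, hhg⟩ := hga.exists_pow_eq hg₀ (n := n) (by omega)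
  have hh₀ : h z₀ ≠ 0 := fun h0 ↦ hg₀ (by rw [← hhg, h0, zero_pow (by omega)])
  have hφ : HasStrictDerivAt (fun z ↦ (z - z₀) * h z) (h z₀) z₀ := by
    have hsub : HasStrictDerivAt (· - z₀) 1 z₀ := (hasStrictDerivAt_id z₀).sub_const z₀
    simpa using hsub.fun_mul hha.hasStrictDerivAt
  refine not_injOn_of_eventually_eq_add_pow hn2 (by simpa using hφ.map_nhds_eq hh₀) ?_
    (hU.mem_nhds hz₀) hinj
  filter_upwards [hfg] with z hz
  rw [mul_pow, hhg, ← smul_eq_mul, ← hz, add_sub_cancel]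

theorem DiffContOnCl.dslope {E : Type*} [NormedAddCommGroup E] [NormedSpace ℂ E] [CompleteSpace E]
    {f : ℂ → E} {U : Set ℂ} {a : ℂ} (hf : DiffContOnCl ℂ f U) (hU : IsOpen U) (ha : a ∈ U) :
    DiffContOnCl ℂ (dslope f a) U :=
  ⟨(Complex.differentiableOn_dslope (hU.mem_nhds ha)).2 hf.1,
    (continuousOn_dslope (mem_of_superset (hU.mem_nhds ha) subset_closure)).2
      ⟨hf.2, hf.1.differentiableAt (hU.mem_nhds ha)⟩⟩

theorem Complex.dslope_ne_zero_of_injOn {f : ℂ → ℂ} {U : Set ℂ} {a z : ℂ} (hU : IsOpen U)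
    (hf : DifferentiableOn ℂ f U) (hinj : InjOn f (closure U)) (ha : a ∈ U)
    (hz : z ∈ closure U) : dslope f a z ≠ 0 := by
  rcases eq_or_ne z a with rfl | hza
  · rw [dslope_same]
    exact deriv_ne_zero_of_injOn hU hf (hinj.mono subset_closure) ha
  · rw [dslope_of_ne _ hza, slope_def_field]
    exact div_ne_zero (sub_ne_zero.2 fun h ↦ hza (hinj hz (subset_closure ha) h))
      (sub_ne_zero.2 hza)

theorem Complex.eqOn_closure_of_norm_eq_one_on_frontier {q : ℂ → ℂ} {U : Set ℂ} {c : ℂ}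
    (hUo : IsOpen U) (hUc : IsPreconnected U) (hUb : IsBounded U) (hc : c ∈ U)
    (hq : DiffContOnCl ℂ q U) (hq₀ : ∀ z ∈ closure U, q z ≠ 0)
    (hq₁ : ∀ z ∈ frontier U, ‖q z‖ = 1) : EqOn q (Function.const ℂ (q c)) (closure U) := by
  have hle : ∀ z ∈ closure U, ‖q z‖ ≤ 1 := fun z hz ↦
    norm_le_of_forall_mem_frontier_norm_le hUb hq (fun w hw ↦ (hq₁ w hw).le) hz
  have hinv_le : ∀ z ∈ closure U, ‖(q z)⁻¹‖ ≤ 1 := fun z hz ↦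
    norm_le_of_forall_mem_frontier_norm_le hUb (hq.inv hq₀)
      (fun w hw ↦ by rw [Pi.inv_apply, norm_inv, hq₁ w hw, inv_one]) hz
  have hnorm : ∀ z ∈ closure U, ‖q z‖ = 1 := fun z hz ↦ by
    have := hinv_le z hz
    rw [norm_inv, inv_le_one_iff₀] at this
    have := norm_pos_iff.2 (hq₀ z hz)
    have := hle z hz
    grind
  refine eqOn_closure_of_isPreconnected_of_isMaxOn_norm hUc hUo hq hc fun z hz ↦ ?_
  simp [hnorm z (subset_closure hz), hnorm c (subset_closure hc)]

theorem Complex.exists_eqOn_const_mul_of_injOn {U : Set ℂ} {f g : ℂ → ℂ} (hUo : IsOpen U)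
    (hUc : IsPreconnected U) (hUb : IsBounded U) (h0 : 0 ∈ U)
    (hf : DiffContOnCl ℂ f U) (hg : DiffContOnCl ℂ g U)
    (hfi : InjOn f (closure U)) (hgi : InjOn g (closure U)) (hf0 : f 0 = 0) (hg0 : g 0 = 0)
    (hf₁ : ∀ z ∈ frontier U, ‖f z‖ = 1) (hg₁ : ∀ z ∈ frontier U, ‖g z‖ = 1) :
    ∃ c, ∀ z ∈ closure U, g z = c * f z := by
  have hA := fun z hz ↦ dslope_ne_zero_of_injOn hUo hf.1 hfi h0 (z := z) hz
  have hB := fun z hz ↦ dslope_ne_zero_of_injOn hUo hg.1 hgi h0 (z := z) hz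
  have hfA : ∀ z, z * dslope f 0 z = f z := fun z ↦ by simpa [hf0] using sub_smul_dslope f 0 z
  have hgB : ∀ z, z * dslope g 0 z = g z := fun z ↦ by simpa [hg0] using sub_smul_dslope g 0 z
  set q := fun z ↦ dslope g 0 z / dslope f 0 z
  have hq : DiffContOnCl ℂ q U := by
    obtain ⟨hAd, hAc⟩ := hf.dslope hUo h0
    obtain ⟨hBd, hBc⟩ := hg.dslope hUo h0
    exact ⟨hBd.div hAd fun z hz ↦ hA z (subset_closure hz), hBc.div hAc hA⟩
  have hq₁ : ∀ z ∈ frontier U, ‖q z‖ = 1 := fun z hz ↦ by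
    have hAB : ‖z‖ * ‖dslope g 0 z‖ = ‖z‖ * ‖dslope f 0 z‖ := by
      rw [← norm_mul, ← norm_mul, hfA, hgB, hf₁ z hz, hg₁ z hz]
    have hz0 : z ≠ 0 := fun h ↦ (hUo.frontier_eq ▸ hz).2 (h ▸ h0)
    rw [norm_div, mul_left_cancel₀ (norm_ne_zero_iff.2 hz0) hAB,
      div_self (norm_ne_zero_iff.2 (hA z hz.1))]
  have hconst := eqOn_closure_of_norm_eq_one_on_frontier hUo hUc hUb h0 hq
    (fun z hz ↦ div_ne_zero (hB z hz) (hA z hz)) hq₁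
  refine ⟨q 0, fun z hz ↦ ?_⟩
  have hqz : q z = q 0 := hconst hz
  rw [← hfA, ← hgB, ← hqz, mul_left_comm, div_mul_cancel₀ _ (hA z hz)]

theorem rigidRot_eq_circleExp_mul (t : ℝ) (z : ℂ) : rigidRot t z = Circle.exp (2 * π * t) * z := by
  rw [rigidRot, Circle.coe_exp]
  push_cast
  ring_nf

theorem norm_rigidRot (t : ℝ) (z : ℂ) : ‖rigidRot t z‖ = ‖z‖ := by
  rw [rigidRot_eq_circleExp_mul, norm_mul, Circle.norm_coe, one_mul]

theorem Circle.denseRange_exp_zpow {t : ℝ} (ht : Irrational t) :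
    DenseRange fun m : ℤ ↦ Circle.exp (2 * π * t) ^ m := by
  have h := AddCircle.denseRange_zsmul_coe_iff (p := 1) (a := t) |>.2 (by simpa using ht)
  convert (AddCircle.homeomorphCircle one_ne_zero).surjective.denseRange.comp h
    (AddCircle.homeomorphCircle one_ne_zero).continuous using 2 with m
  simp [AddCircle.homeomorphCircle_apply, AddCircle.toCircle_zsmul, AddCircle.toCircle_apply_mk]

theorem eq_mul_of_commute_rigidRot {t : ℝ} (ht : Irrational t) {ψ : ℂ → ℂ}
    (hψ : ContinuousOn ψ (sphere 0 1))
    (hcomm : ∀ w ∈ sphere (0 : ℂ) 1, ψ (rigidRot t w) = rigidRot t (ψ w)) :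
    ∀ w ∈ sphere (0 : ℂ) 1, ψ w = ψ 1 * w := by
  set u := Circle.exp (2 * π * t)
  have hrot : ∀ w, rigidRot t w = u * w := rigidRot_eq_circleExp_mul t
  have horbit : ∀ m : ℤ, ψ (u ^ m : Circle) = ψ 1 * (u ^ m : Circle) := by
    have hstep (m : ℤ) : ψ (u ^ m : Circle) = ψ 1 * (u ^ m : Circle) ↔
        ψ (u ^ (m + 1) : Circle) = ψ 1 * (u ^ (m + 1) : Circle) := by
      rw [zpow_add_one, Circle.coe_mul, mul_comm _ (u : ℂ), ← hrot, hcomm _ (u ^ m).2, hrot, hrot,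
        mul_left_comm, mul_right_inj' u.coe_ne_zero]
    intro m
    induction m using Int.induction_on with
    | zero => simp
    | succ m ih => exact (hstep m).1 ih
    | pred m ih => exact (hstep _).2 (by simpa using ih)
  have hext : (fun z : Circle ↦ ψ z) = fun z : Circle ↦ ψ 1 * z :=
    (Circle.denseRange_exp_zpow ht).equalizer (hψ.comp_continuous continuous_subtype_val (·.2))
      (continuous_const.mul continuous_subtype_val) (funext horbit)
  exact fun w hw ↦ congrFun hext ⟨w, hw⟩

theorem Set.BijOn.frontier {X Y : Type*} [TopologicalSpace X] [TopologicalSpace Y] {f : X → Y}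
    {s : Set X} {t : Set Y} (h : BijOn f s t) (hcl : BijOn f (closure s) (closure t))
    (hs : IsOpen s) (ht : IsOpen t) : BijOn f (frontier s) (frontier t) := by
  rw [hs.frontier_eq, ht.frontier_eq]
  refine ⟨fun z hz ↦ ⟨hcl.mapsTo hz.1, fun hfz ↦ hz.2 ?_⟩, hcl.injOn.mono sdiff_subset,
    fun w hw ↦ ?_⟩
  · obtain ⟨z', hz', he⟩ := h.surjOn hfz
    exact hcl.injOn (subset_closure hz') hz.1 he ▸ hz'
  · obtain ⟨z, hz, rfl⟩ := hcl.surjOn hw.1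
    exact ⟨z, ⟨hz, fun hzs ↦ hw.2 (h.mapsTo hzs)⟩, rfl⟩

theorem closure_unitDisk : closure unitDisk = closedBall 0 1 := closure_ball 0 one_ne_zero

theorem frontier_unitDisk : frontier unitDisk = sphere 0 1 := frontier_ball 0 one_ne_zero

theorem norm_eq_one_of_mem_frontier {Δ : Set ℂ} {ζ : ℂ → ℂ} (hΔ : IsOpen Δ)
    (h : BijOn ζ Δ unitDisk) (hcl : BijOn ζ (closure Δ) (closure unitDisk)) {z : ℂ}
    (hz : z ∈ frontier Δ) : ‖ζ z‖ = 1 := by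
  have h := (h.frontier hcl hΔ isOpen_ball).mapsTo hz
  rwa [frontier_unitDisk, mem_sphere_zero_iff_norm] at h

namespace IsRiemannMapPair

variable {Δ : Set ℂ} {ζ η : ℂ → ℂ}

theorem norm_eq_one (hζ : IsRiemannMapPair Δ ζ η) (hΔ : IsOpen Δ) {z : ℂ}
    (hz : z ∈ frontier Δ) : ‖ζ z‖ = 1 :=
  norm_eq_one_of_mem_frontier hΔ hζ.2.1 hζ.2.2.2.1 hz

theorem inv_apply (hζ : IsRiemannMapPair Δ ζ η) {z : ℂ} (hz : z ∈ closure Δ) : η (ζ z) = z :=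
  hζ.2.2.2.2.2.1.1 hz

theorem apply_inv (hζ : IsRiemannMapPair Δ ζ η) {w : ℂ} (hw : ‖w‖ ≤ 1) : ζ (η w) = w :=
  hζ.2.2.2.2.2.1.2 (by rwa [closure_unitDisk, mem_closedBall_zero_iff])

theorem inv_mem_frontier (hζ : IsRiemannMapPair Δ ζ η) (hΔ : IsOpen Δ) {w : ℂ}
    (hw : w ∈ sphere 0 1) : η w ∈ frontier Δ := by
  obtain ⟨z, hz, rfl⟩ :=
    (hζ.2.1.frontier hζ.2.2.2.1 hΔ isOpen_ball).surjOn (frontier_unitDisk ▸ hw)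
  rwa [hζ.inv_apply hz.1]

end IsRiemannMapPair

theorem IsMarkedRiemannMap.eq_div {Δ : Set ℂ} {b : ℂ} {ξ ζ η : ℂ → ℂ} (hΔo : IsOpen Δ)
    (hΔc : IsPreconnected Δ) (hΔb : IsBounded Δ) (h0 : 0 ∈ Δ) (hξ : IsMarkedRiemannMap Δ b ξ)
    (hζ : IsRiemannMapPair Δ ζ η) (hb : b ∈ frontier Δ) {z : ℂ} (hz : z ∈ closure Δ) :
    ξ z = ζ z / ζ b := by
  obtain ⟨hζd, hζb, hζc, hζcb, -, -, hζ0⟩ := hζ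
  obtain ⟨hξd, hξb, hξc, hξcb, -, hξ0, hξ1⟩ := hξ
  obtain ⟨c, hc⟩ := Complex.exists_eqOn_const_mul_of_injOn hΔo hΔc hΔb h0 ⟨hζd, hζc⟩ ⟨hξd, hξc⟩
    hζcb.injOn hξcb.injOn hζ0 hξ0 (fun _ ↦ norm_eq_one_of_mem_frontier hΔo hζb hζcb)
    (fun _ ↦ norm_eq_one_of_mem_frontier hΔo hξb hξcb)
  have hcb : c * ζ b = 1 := hc b hb.1 ▸ hξ1
  rw [hc z hz, eq_div_iff (right_ne_zero_of_mul_eq_one hcb)]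
  linear_combination ζ z * hcb

theorem exists_eq_mul_of_equivariant {Δ₁ Δ₂ : Set ℂ} {ζ₁ η₁ ζ₂ η₂ φ : ℂ → ℂ} {t : ℝ}
    (hΔ₁ : IsOpen Δ₁) (hΔ₂ : IsOpen Δ₂) (hζ₁ : IsRiemannMapPair Δ₁ ζ₁ η₁)
    (hζ₂ : IsRiemannMapPair Δ₂ ζ₂ η₂) (ht : Irrational t) (hφc : ContinuousOn φ (frontier Δ₁))
    (hφ : MapsTo φ (frontier Δ₁) (frontier Δ₂))
    (hequiv : ∀ z ∈ frontier Δ₁, φ (η₁ (rigidRot t (ζ₁ z))) = η₂ (rigidRot t (ζ₂ (φ z)))) :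
    ∃ a, ∀ b ∈ frontier Δ₁, ζ₂ (φ b) = a * ζ₁ b := by
  set ψ := fun w ↦ ζ₂ (φ (η₁ w))
  have hη : MapsTo η₁ (sphere 0 1) (frontier Δ₁) := fun _ ↦ hζ₁.inv_mem_frontier hΔ₁
  have hζ₂c : ContinuousOn ζ₂ (closure Δ₂) := hζ₂.2.2.1
  have hη₁c : ContinuousOn η₁ (closure unitDisk) := hζ₁.2.2.2.2.1
  have hψ : ContinuousOn ψ (sphere 0 1) :=
    (hζ₂c.mono frontier_subset_closure).comp
      (hφc.comp (hη₁c.mono (closure_unitDisk ▸ sphere_subset_closedBall)) hη) (hφ.comp hη)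
  have hcomm : ∀ w ∈ sphere (0 : ℂ) 1, ψ (rigidRot t w) = rigidRot t (ψ w) := by
    intro w hw
    have h := hequiv _ (hη hw)
    rw [hζ₁.apply_inv (mem_sphere_zero_iff_norm.1 hw).le] at h
    simp only [ψ]
    rw [h, hζ₂.apply_inv (by rw [norm_rigidRot, hζ₂.norm_eq_one hΔ₂ (hφ (hη hw))])]
  refine ⟨ψ 1, fun b hb ↦ ?_⟩
  have h := eq_mul_of_commute_rigidRot ht hψ hcomm (ζ₁ b)
    (mem_sphere_zero_iff_norm.2 (hζ₁.norm_eq_one hΔ₁ hb))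
  simpa only [ψ, hζ₁.inv_apply hb.1] using h

theorem same_conformal_position_independent_of_marking_general
    (Δ₁ Δ₂ : Set ℂ) (hΔ₁ : IsJordanDomain Δ₁) (hΔ₂ : IsJordanDomain Δ₂)
    (h0₁ : (0 : ℂ) ∈ Δ₁) (h0₂ : (0 : ℂ) ∈ Δ₂)
    (ζ₁ η₁ ζ₂ η₂ : ℂ → ℂ)
    (hζ₁ : IsRiemannMapPair Δ₁ ζ₁ η₁) (hζ₂ : IsRiemannMapPair Δ₂ ζ₂ η₂)
    (t : ℝ) (ht : Irrational t)
    (φ : ℂ → ℂ) (hφcont : ContinuousOn φ (frontier Δ₁))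
    (hφbij : Set.BijOn φ (frontier Δ₁) (frontier Δ₂))
    -- equivariance: φ ∘ h_t¹ = h_t² ∘ φ on ∂Δ₁, where h_t^j = η_j ∘ R_t ∘ ζ_j
    (hequiv : ∀ z ∈ frontier Δ₁, φ (η₁ (rigidRot t (ζ₁ z))) = η₂ (rigidRot t (ζ₂ (φ z))))
    (z₁ z₂ : ℂ) (hz₁ : z₁ ∈ Δ₁) (hz₂ : z₂ ∈ Δ₂)
    (b : ℂ) (hb : b ∈ frontier Δ₁) (ξ₁ ξ₂ : ℂ → ℂ)
    (hξ₁ : IsMarkedRiemannMap Δ₁ b ξ₁) (hξ₂ : IsMarkedRiemannMap Δ₂ (φ b) ξ₂)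
    (hsame : ξ₁ z₁ = ξ₂ z₂) :
    ∀ b' ∈ frontier Δ₁, ∀ ξ₁' ξ₂' : ℂ → ℂ,
      IsMarkedRiemannMap Δ₁ b' ξ₁' → IsMarkedRiemannMap Δ₂ (φ b') ξ₂' →
      ξ₁' z₁ = ξ₂' z₂ := by
  obtain ⟨hΔ₁o, hΔ₁c, hΔ₁b, -⟩ := hΔ₁
  obtain ⟨hΔ₂o, hΔ₂c, hΔ₂b, -⟩ := hΔ₂
  obtain ⟨a, ha⟩ := exists_eq_mul_of_equivariant hΔ₁o hΔ₂o hζ₁ hζ₂ ht hφcont hφbij.mapsTo hequiv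
  have hposition : ∀ b ∈ frontier Δ₁, ∀ ξ₁ ξ₂ : ℂ → ℂ, IsMarkedRiemannMap Δ₁ b ξ₁ →
      IsMarkedRiemannMap Δ₂ (φ b) ξ₂ → (ξ₁ z₁ = ξ₂ z₂ ↔ a * ζ₁ z₁ = ζ₂ z₂) := by
    intro b hb ξ₁ ξ₂ hξ₁ hξ₂
    have hζb : ζ₁ b ≠ 0 := by simp [← norm_ne_zero_iff, hζ₁.norm_eq_one hΔ₁o hb]
    have hζφb : a * ζ₁ b ≠ 0 := ha b hb ▸ by
      simp [← norm_ne_zero_iff, hζ₂.norm_eq_one hΔ₂o (hφbij.mapsTo hb)]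
    rw [hξ₁.eq_div hΔ₁o hΔ₁c.isPreconnected hΔ₁b h0₁ hζ₁ hb (subset_closure hz₁),
      hξ₂.eq_div hΔ₂o hΔ₂c.isPreconnected hΔ₂b h0₂ hζ₂ (hφbij.mapsTo hb) (subset_closure hz₂),
      ha b hb, div_eq_div_iff hζb hζφb, ← mul_assoc, mul_comm (ζ₁ z₁) a, mul_left_inj' hζb]
  intro b' hb' ξ₁' ξ₂' hξ₁' hξ₂'
  exact (hposition b' hb' ξ₁' ξ₂' hξ₁' hξ₂').2 ((hposition b hb ξ₁ ξ₂ hξ₁ hξ₂).1 hsame)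

/-- If `φ : ∂Δ₁ → ∂Δ₂` is a homeomorphism which is equivariant for the intrinsic
rotations by an irrational angle `t`, then "same conformal position" relative to the
markings `b` and `φ b` is independent of the choice of `b ∈ ∂Δ₁`. -/
theorem same_conformal_position_independent_of_marking
    (Δ₁ Δ₂ : Set ℂ) (hΔ₁ : IsJordanDomain Δ₁) (hΔ₂ : IsJordanDomain Δ₂)
    (h0₁ : (0 : ℂ) ∈ Δ₁) (h0₂ : (0 : ℂ) ∈ Δ₂)
    (ζ₁ η₁ ζ₂ η₂ : ℂ → ℂ)
    (hζ₁ : IsRiemannMapPair Δ₁ ζ₁ η₁) (hζ₂ : IsRiemannMapPair Δ₂ ζ₂ η₂)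
    (t : ℝ) (ht : Irrational t)
    (φ : ℂ → ℂ) (hφcont : ContinuousOn φ (frontier Δ₁))
    (hφbij : Set.BijOn φ (frontier Δ₁) (frontier Δ₂))
    (hφinv : ∃ χ : ℂ → ℂ, ContinuousOn χ (frontier Δ₂) ∧
      Set.InvOn χ φ (frontier Δ₁) (frontier Δ₂))
    -- equivariance: φ ∘ h_t¹ = h_t² ∘ φ on ∂Δ₁, where h_t^j = η_j ∘ R_t ∘ ζ_j
    (hequiv : ∀ z ∈ frontier Δ₁, φ (η₁ (rigidRot t (ζ₁ z))) = η₂ (rigidRot t (ζ₂ (φ z))))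
    (z₁ z₂ : ℂ) (hz₁ : z₁ ∈ Δ₁) (hz₂ : z₂ ∈ Δ₂)
    (b : ℂ) (hb : b ∈ frontier Δ₁) (ξ₁ ξ₂ : ℂ → ℂ)
    (hξ₁ : IsMarkedRiemannMap Δ₁ b ξ₁) (hξ₂ : IsMarkedRiemannMap Δ₂ (φ b) ξ₂)
    (hsame : ξ₁ z₁ = ξ₂ z₂) :
    ∀ b' ∈ frontier Δ₁, ∀ ξ₁' ξ₂' : ℂ → ℂ,
      IsMarkedRiemannMap Δ₁ b' ξ₁' → IsMarkedRiemannMap Δ₂ (φ b') ξ₂' →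
      ξ₁' z₁ = ξ₂' z₂ :=
  same_conformal_position_independent_of_marking_general Δ₁ Δ₂ hΔ₁ hΔ₂ h0₁ h0₂ ζ₁ η₁ ζ₂ η₂ hζ₁ hζ₂ t
    ht φ hφcont hφbij hequiv z₁ z₂ hz₁ hz₂ b hb ξ₁ ξ₂ hξ₁ hξ₂ hsame
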